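/- arXiv:1706.05897 — 2 statements merged into one kernel-verified Lean document; each statement's English description precedes it below -/
import Mathlib

section
/- Let d ∈ {2,3} and let S ⊆ ℝ^d be a set whose (d−1)-dimensional Hausdorff measure is positive, μH[d−1](S) > 0. If c ∈ ℝ^d and W is a skew-symmetric d×d real matrix such that c + W·x = 0 for every x ∈ S, then c = 0 and W = 0. (This is the core of Proposition 5.1: the linear system c + Wx = 0 on a boundary portion of positive surface measure has only the trivial solution.) -/
/-!
A nonzero skew-symmetric matrix has a principal `2 × 2` minor `W i j ^ 2 ≠ 0`, so its rank is at
least `2`. Hence the zero set of `x ↦ c + W x`, if nonempty, is an affine subspace of dimension at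
most `d - 2`, which is null for the `(d - 1)`-dimensional Hausdorff measure. So `W = 0`, and then
`c = 0` because `S` is nonempty.
-/

open MeasureTheory Module
open scoped Matrix NNReal

namespace Matrix

theorem two_le_rank_of_transpose_eq_neg {K n : Type*} [Field K] [CharZero K] [Fintype n]
    {W : Matrix n n K} (hW : Wᵀ = -W) (hW0 : W ≠ 0) : 2 ≤ W.rank := by
  have hskew : ∀ i j, W j i = -W i j := fun i j => by
    simpa using congrFun (congrFun hW i) j
  have hdiag : ∀ i, W i i = 0 := fun i => self_eq_neg.mp (hskew i i)
  obtain ⟨i, j, hij⟩ : ∃ i j, W i j ≠ 0 := by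
    by_contra! h
    exact hW0 (Matrix.ext h)
  have hdet : (W.submatrix ![i, j] ![i, j]).det = W i j ^ 2 := by
    rw [det_fin_two]
    simp [hdiag, hskew i j, sq]
  have hunit : IsUnit (W.submatrix ![i, j] ![i, j]) := by
    rw [isUnit_iff_isUnit_det, hdet]
    exact (pow_ne_zero 2 hij).isUnit
  calc 2 = (W.submatrix ![i, j] ![i, j]).rank := by
        rw [rank_of_isUnit _ hunit, Fintype.card_fin]
    _ ≤ W.rank := rank_submatrix_le W ![i, j] ![i, j]

theorem finrank_ker_toEuclideanLin_add_rank {𝕜 n : Type*} [RCLike 𝕜] [Fintype n]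
    [DecidableEq n] (W : Matrix n n 𝕜) :
    finrank 𝕜 (LinearMap.ker (toEuclideanLin W)) + W.rank = Fintype.card n := by
  rw [W.rank_eq_finrank_range_toLin (EuclideanSpace.basisFun n 𝕜).toBasis
    (EuclideanSpace.basisFun n 𝕜).toBasis, ← toEuclideanLin_eq_toLin_orthonormal, add_comm,
    LinearMap.finrank_range_add_finrank_ker, finrank_euclideanSpace]

end Matrix

namespace AffineSubspace

variable {E : Type*} [NormedAddCommGroup E] [NormedSpace ℝ E] [FiniteDimensional ℝ E]

theorem dimH_le_finrank_direction (A : AffineSubspace ℝ E) :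
    dimH (A : Set E) ≤ finrank ℝ A.direction := by
  rcases (A : Set E).eq_empty_or_nonempty with hA | hA
  · simp [hA]
  · exact (Real.Convex.dimH_eq_finrank_vectorSpan A.convex hA).le

theorem hausdorffMeasure_eq_zero_of_finrank_lt [MeasurableSpace E] [BorelSpace E]
    (A : AffineSubspace ℝ E) {s : ℝ} (hs : finrank ℝ A.direction < s) :
    μH[s] (A : Set E) = 0 := by
  lift s to ℝ≥0 using (Nat.cast_nonneg _).trans hs.le
  refine hausdorffMeasure_of_dimH_lt (A.dimH_le_finrank_direction.trans_lt ?_)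
  exact_mod_cast hs

end AffineSubspace

theorem rigid_motion_vanishing_on_positive_surface_measure_set_general
    (d : ℕ)
    (S : Set (EuclideanSpace ℝ (Fin d)))
    (hS : 0 < μH[(d : ℝ) - 1] S)
    (c : EuclideanSpace ℝ (Fin d)) (W : Matrix (Fin d) (Fin d) ℝ)
    (hW : W.transpose = -W)
    (h : ∀ x ∈ S, c + Matrix.toEuclideanLin W x = 0) :
    c = 0 ∧ W = 0 := by
  obtain ⟨x₀, hx₀⟩ : S.Nonempty := nonempty_of_measure_ne_zero hS.ne'
  have hW0 : W = 0 := by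
    by_contra hW0
    have hK : finrank ℝ (LinearMap.ker (Matrix.toEuclideanLin W)) + 2 ≤ d := by
      have hsum := W.finrank_ker_toEuclideanLin_add_rank
      have hrank := W.two_le_rank_of_transpose_eq_neg hW hW0
      rw [Fintype.card_fin] at hsum
      omega
    set K := LinearMap.ker (Matrix.toEuclideanLin W)
    have hSK : S ⊆ AffineSubspace.mk' x₀ K := fun x hx => by
      rw [SetLike.mem_coe, AffineSubspace.mem_mk', vsub_eq_sub, LinearMap.mem_ker, map_sub,
        sub_eq_zero, ← add_right_inj c, h x hx, h x₀ hx₀]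
    have hKs : (finrank ℝ (AffineSubspace.mk' x₀ K).direction : ℝ) < d - 1 := by
      rw [AffineSubspace.direction_mk']
      have : (finrank ℝ K : ℝ) + 2 ≤ d := by exact_mod_cast hK
      linarith
    exact hS.ne' <| measure_mono_null hSK <|
      AffineSubspace.hausdorffMeasure_eq_zero_of_finrank_lt _ hKs
  refine ⟨?_, hW0⟩
  simpa [hW0] using h x₀ hx₀

/-- Core of Proposition 5.1: if a rigid body motion `x ↦ c + W·x` (with `W`
skew-symmetric) vanishes on a set `S ⊆ ℝ^d` (`d ∈ {2,3}`) of positive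
`(d-1)`-dimensional Hausdorff measure, then `c = 0` and `W = 0`. -/
theorem rigid_motion_vanishing_on_positive_surface_measure_set
    (d : ℕ) (hd : d = 2 ∨ d = 3)
    (S : Set (EuclideanSpace ℝ (Fin d)))
    (hS : 0 < μH[(d : ℝ) - 1] S)
    (c : EuclideanSpace ℝ (Fin d)) (W : Matrix (Fin d) (Fin d) ℝ)
    (hW : W.transpose = -W)
    (h : ∀ x ∈ S, c + Matrix.toEuclideanLin W x = 0) :
    c = 0 ∧ W = 0 :=
  rigid_motion_vanishing_on_positive_surface_measure_set_general d S hS c W hW h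
end

section
/- Let d ∈ {2,3} and let S ⊆ ℝ^d be a Borel set with μH[d−1](S) > 0. If c ∈ ℝ^d and W is a skew-symmetric d×d real matrix such that ∫_S ‖c + W·x‖² dμH[d−1](x) = 0, then c = 0 and W = 0. Consequently, the seminorm u ↦ (∫_S ‖u(x)‖² dμH[d−1](x))^{1/2} is positive definite on the space of rigid body motions. (Proposition 5.1: ‖·‖_{Γ^ε} defines a norm on RM(Ω) whenever the boundary portion Γ^ε has positive surface measure.) -/
open MeasureTheory
open scoped ENNReal NNReal

open Set
open scoped InnerProductSpace

/-- Proposition 5.1: if the squared `L²(S, μH[d-1])`-seminorm of the rigid body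
motion `x ↦ c + W·x` (with `W` skew-symmetric) vanishes on a Borel set
`S ⊆ ℝ^d` (`d ∈ {2,3}`) of positive `(d-1)`-dimensional Hausdorff measure,
then `c = 0` and `W = 0`; i.e. the seminorm is positive definite on the space
of rigid body motions. -/
theorem rigid_motion_L2_seminorm_positive_definite
    (d : ℕ) (hd : d = 2 ∨ d = 3)
    (S : Set (EuclideanSpace ℝ (Fin d)))
    (hSm : MeasurableSet S)
    (hS : 0 < μH[(d : ℝ) - 1] S)
    (c : EuclideanSpace ℝ (Fin d)) (W : Matrix (Fin d) (Fin d) ℝ)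
    (hW : W.transpose = -W)
    (h : ∫⁻ x in S, (‖c + Matrix.toEuclideanLin W x‖₊ : ℝ≥0∞) ^ 2
      ∂(μH[(d : ℝ) - 1]) = 0) :
    c = 0 ∧ W = 0 := by
  set L : EuclideanSpace ℝ (Fin d) →ₗ[ℝ] EuclideanSpace ℝ (Fin d) :=
    Matrix.toEuclideanLin W with hL
  set μ : Measure (EuclideanSpace ℝ (Fin d)) := μH[(d : ℝ) - 1] with hμ
  set Z : Set (EuclideanSpace ℝ (Fin d)) := {x | c + L x = 0} with hZdef
  have hcont : Continuous fun x : EuclideanSpace ℝ (Fin d) => c + L x :=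
    continuous_const.add L.continuous_of_finiteDimensional
  have hmeas : Measurable fun x : EuclideanSpace ℝ (Fin d) => (‖c + L x‖₊ : ℝ≥0∞) ^ 2 :=
    ((measurable_coe_nnreal_ennreal.comp hcont.nnnorm.measurable).pow_const 2)
  have hae : ∀ᵐ x ∂(μ.restrict S), (‖c + L x‖₊ : ℝ≥0∞) ^ 2 = 0 :=
    (lintegral_eq_zero_iff hmeas).mp h
  have hae' : ∀ᵐ x ∂μ, x ∈ S → x ∈ Z := by
    filter_upwards [(ae_restrict_iff' hSm).mp hae] with x hx hxS
    have := hx hxS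
    simpa [hZdef, pow_eq_zero_iff, nnnorm_eq_zero] using this
  have hSZ : μ (S \ Z) = 0 := by
    rw [measure_eq_zero_iff_ae_notMem]
    filter_upwards [hae'] with x hx
    rintro ⟨hxS, hxZ⟩
    exact hxZ (hx hxS)
  have hpos : 0 < μ (S ∩ Z) := by
    have hle : μ S ≤ μ (S ∩ Z) + μ (S \ Z) := measure_le_inter_add_diff μ S Z
    rw [hSZ, add_zero] at hle
    exact lt_of_lt_of_le hS hle
  have hZpos : 0 < μ Z := lt_of_lt_of_le hpos (measure_mono inter_subset_right)
  obtain ⟨x₀, hx₀⟩ : Z.Nonempty := nonempty_of_measure_ne_zero hZpos.ne'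
  have hadj : LinearMap.adjoint L = -L := by
    rw [hL, ← Matrix.toEuclideanLin_conjTranspose_eq_adjoint,
      Matrix.conjTranspose_eq_transpose_of_trivial, hW, map_neg]
  have hskew : ∀ x y : EuclideanSpace ℝ (Fin d), ⟪L x, y⟫_ℝ = -⟪x, L y⟫_ℝ := by
    intro x y
    rw [← LinearMap.adjoint_inner_right L x y, hadj, LinearMap.neg_apply, inner_neg_right]
  have hW0 : W = 0 := by
    by_contra hW0
    have hL0 : L ≠ 0 := by
      intro hc0
      apply hW0
      apply Matrix.toEuclideanLin.injective
      rw [← hL, hc0, map_zero]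
    have hrank : 2 ≤ Module.finrank ℝ (LinearMap.range L) := by
      by_contra hlt
      push_neg at hlt
      interval_cases hr : Module.finrank ℝ (LinearMap.range L)
      · exact hL0 (LinearMap.range_eq_bot.mp (Submodule.finrank_eq_zero.mp hr))
      · obtain ⟨v, hv0, hvspan⟩ := finrank_eq_one_iff'.mp hr
        obtain ⟨a, ha⟩ := hvspan ⟨L (v : EuclideanSpace ℝ (Fin d)),
          LinearMap.mem_range_self L (v : EuclideanSpace ℝ (Fin d))⟩
        have hva : L (v : EuclideanSpace ℝ (Fin d)) = a • (v : EuclideanSpace ℝ (Fin d)) := by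
          have := congrArg Subtype.val ha
          simpa using this.symm
        have hinner0 : ⟪L (v : EuclideanSpace ℝ (Fin d)), (v : EuclideanSpace ℝ (Fin d))⟫_ℝ
            = 0 := by
          have h1 := hskew (v : EuclideanSpace ℝ (Fin d)) (v : EuclideanSpace ℝ (Fin d))
          have h2 : ⟪L (v : EuclideanSpace ℝ (Fin d)), (v : EuclideanSpace ℝ (Fin d))⟫_ℝ
              = ⟪(v : EuclideanSpace ℝ (Fin d)), L (v : EuclideanSpace ℝ (Fin d))⟫_ℝ :=
            real_inner_comm _ _
          linarith
        have hvv : ⟪(v : EuclideanSpace ℝ (Fin d)), (v : EuclideanSpace ℝ (Fin d))⟫_ℝ ≠ 0 := by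
          have hvne : (v : EuclideanSpace ℝ (Fin d)) ≠ 0 := fun hc =>
            hv0 (Subtype.coe_injective (by simpa using hc))
          exact fun hc => hvne (inner_self_eq_zero.mp hc)
        have ha0 : a = 0 := by
          rw [hva, real_inner_smul_left] at hinner0
          exact (mul_eq_zero.mp hinner0).resolve_right hvv
        have hLv0 : L (v : EuclideanSpace ℝ (Fin d)) = 0 := by rw [hva, ha0, zero_smul]
        obtain ⟨u, hu⟩ := v.2
        apply hvv
        rw [← hu, hskew u (L u), hu, hLv0, inner_zero_right, neg_zero]
    have hrn : Module.finrank ℝ (LinearMap.range L) + Module.finrank ℝ (LinearMap.ker L)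
        = d := by
      rw [LinearMap.finrank_range_add_finrank_ker]
      simp
    have hker : Module.finrank ℝ (LinearMap.ker L) ≤ d - 2 := by omega
    have hZsub : Z ⊆ (fun y => x₀ + y) '' ((LinearMap.ker L : Submodule ℝ _) :
        Set (EuclideanSpace ℝ (Fin d))) := by
      intro x hx
      refine ⟨x - x₀, ?_, by module⟩
      have hx' : c + L x = 0 := hx
      have hx₀' : c + L x₀ = 0 := hx₀
      simp only [SetLike.mem_coe, LinearMap.mem_ker, map_sub]
      have e1 : L x = -c := by linear_combination (norm := module) hx'
      have e2 : L x₀ = -c := by linear_combination (norm := module) hx₀'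
      rw [e1, e2, sub_self]
    have hdim : dimH Z ≤ ((d - 2 : ℕ) : ℝ≥0∞) := by
      calc dimH Z ≤ dimH ((fun y => x₀ + y) '' ((LinearMap.ker L : Submodule ℝ _) :
              Set (EuclideanSpace ℝ (Fin d)))) := dimH_mono hZsub
        _ = dimH ((LinearMap.ker L : Submodule ℝ _) : Set (EuclideanSpace ℝ (Fin d))) :=
            Isometry.dimH_image (Isometry.of_dist_eq fun a b => by simp [dist_add_left]) _
        _ = dimH (((↑) : LinearMap.ker L → EuclideanSpace ℝ (Fin d)) '' univ) := by
            rw [image_univ, Subtype.range_coe]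
        _ = dimH (univ : Set (LinearMap.ker L)) :=
            Isometry.dimH_image (f := (Subtype.val : LinearMap.ker L → EuclideanSpace ℝ (Fin d)))
              (fun a b => rfl) _
        _ = (Module.finrank ℝ (LinearMap.ker L) : ℝ≥0∞) :=
            Real.dimH_univ_eq_finrank _
        _ ≤ ((d - 2 : ℕ) : ℝ≥0∞) := by exact_mod_cast hker
    have hZ0 : μ Z = 0 := by
      rcases hd with rfl | rfl
      · have he : μ Z = μH[((1 : ℝ≥0) : ℝ)] Z := by norm_num [hμ]
        rw [he]
        refine hausdorffMeasure_of_dimH_lt (lt_of_le_of_lt hdim ?_)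
        norm_num
      · have he : μ Z = μH[((2 : ℝ≥0) : ℝ)] Z := by norm_num [hμ]
        rw [he]
        refine hausdorffMeasure_of_dimH_lt (lt_of_le_of_lt hdim ?_)
        norm_num
    exact absurd hZ0 hZpos.ne'
  refine ⟨?_, hW0⟩
  have hLzero : L x₀ = 0 := by
    rw [hL, hW0, map_zero]
    rfl
  have hx₀' : c + L x₀ = 0 := hx₀
  rw [hLzero, add_zero] at hx₀'
  exact hx₀'
end
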